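/- Let Y be an m×n real matrix (m ≤ n) with singular value decomposition Y = Σᵢ₌₁^m σ_{Y,i}·uᵢvᵢᵀ, where u₁,…,u_m and v₁,…,v_m are orthonormal families in ℝ^m and ℝ^n respectively and σ_{Y,1} ≥ … ≥ σ_{Y,m} ≥ 0. Let λ > 0 and let r < m be a nonnegative integer. Then the partial singular value thresholding matrix PSVT_{r,λ}(Y) = Σᵢ₌₁^r σ_{Y,i}·uᵢvᵢᵀ + Σ_{i=r+1}^m max(σ_{Y,i} − λ, 0)·uᵢvᵢᵀ is a global minimizer over all m×n real matrices X of ‖X‖_r + (1/(2λ))·‖Y − X‖_F², where ‖X‖_r = Σ_{i=r+1}^m σ_{X,i} is the truncated nuclear norm. -/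

import Mathlib

/-- The singular values of an `m×n` real matrix `X` (`m ≤ n`), in non-increasing order:
`singularValues hmn X i` is the square root of the `(i+1)`-st largest eigenvalue of the
positive semidefinite matrix `XᵀX` (over `ℝ`, `Xᴴ = Xᵀ`). -/
noncomputable def singularValues {m n : ℕ} (hmn : m ≤ n) (X : Matrix (Fin m) (Fin n) ℝ) :
    Fin m → ℝ := fun i =>
  let ev : Fin n → ℝ := (Matrix.isHermitian_conjTranspose_mul_self X).eigenvalues
  Real.sqrt ((ev ∘ Tuple.sort ev) (Fin.rev (Fin.castLE hmn i)))

/-- Squared Frobenius norm of a real matrix: sum of squares of the entries. -/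
def frobSq {m n : ℕ} (A : Matrix (Fin m) (Fin n) ℝ) : ℝ := ∑ i, ∑ j, (A i j) ^ 2

/-!
Write every matrix as `X = Pᵀ diag σ(X) Q` with orthonormal rows, reading the SVD off the
spectral decomposition of `XᵀX`. Bessel's inequality and a rearrangement bound give Ky Fan's
inequality `Σ_{i<k} uᵢᵀ X vᵢ ≤ Σ_{i<k} σᵢ(X)` for orthonormal families. Used in both directions
it shows that `PSVT_{r,λ}(Y) = Uᵀ diag c V` has singular values exactly `c` (a non-increasing
sequence); combined with Abel summation it gives von Neumann's trace inequality and hence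
Mirsky's bound `Σᵢ (σᵢ(Y) − σᵢ(X))² ≤ ‖Y − X‖_F²`. The objective is therefore bounded below by
the decoupled scalar problems `min_{x ≥ 0} [r ≤ i] x + (σ_{Y,i} − x)²/(2λ)`, which soft
thresholding solves, and `PSVT` attains this bound.
-/

open Matrix Finset
open scoped RealInnerProductSpace

section PartialSums

variable {N : ℕ}

theorem Fin.sum_filter_lt_castSucc {M : Type*} [AddCommMonoid M] (c : Fin (N + 1) → M) (k : ℕ) :
    ∑ i : Fin N with i.val < k, c i.castSucc
      = ∑ i : Fin (N + 1) with i.val < min k N, c i := by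
  simp only [Finset.sum_filter, Fin.sum_univ_castSucc, Fin.val_castSucc, Fin.val_last,
    lt_min_iff, lt_irrefl, and_false, if_false, add_zero]
  exact Finset.sum_congr rfl fun i _ => by simp [i.isLt]

theorem Antitone.sum_mul_nonneg_of_partialSums_nonneg {s c : Fin N → ℝ} (hs : Antitone s)
    (hs0 : ∀ i, 0 ≤ s i) (hc : ∀ k : ℕ, 0 ≤ ∑ i : Fin N with i.val < k, c i) :
    0 ≤ ∑ i, s i * c i := by
  induction N with
  | zero => simp
  | succ N ih =>
    -- one step of Abel summation: split off the smallest weight `z`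
    set z := s (Fin.last N)
    have hsplit : ∑ i, s i * c i
        = ∑ i : Fin N, (s i.castSucc - z) * c i.castSucc + z * ∑ i, c i := by
      simp only [Fin.sum_univ_castSucc, sub_mul, Finset.sum_sub_distrib, mul_add,
        Finset.mul_sum, z]
      ring
    have htotal : ∑ i, c i = ∑ i : Fin (N + 1) with i.val < N + 1, c i := by
      rw [Finset.filter_true_of_mem fun i _ => i.isLt]
    rw [hsplit]
    refine add_nonneg (ih (fun i j hij => sub_le_sub_right (hs hij) _)
      (fun i => sub_nonneg.2 (hs (Fin.le_last _))) fun k => ?_)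
      (mul_nonneg (hs0 _) (htotal ▸ hc (N + 1)))
    rw [Fin.sum_filter_lt_castSucc]
    exact hc _

theorem Antitone.sum_mul_le_sum_mul_of_partialSums_le {s a b : Fin N → ℝ} (hs : Antitone s)
    (hs0 : ∀ i, 0 ≤ s i)
    (hab : ∀ k : ℕ, ∑ i : Fin N with i.val < k, a i ≤ ∑ i : Fin N with i.val < k, b i) :
    ∑ i, s i * a i ≤ ∑ i, s i * b i := by
  have := hs.sum_mul_nonneg_of_partialSums_nonneg hs0 (c := b - a) fun k => by
    simpa [Finset.sum_sub_distrib] using hab k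
  simpa [mul_sub, Finset.sum_sub_distrib] using this

theorem Antitone.sum_mul_le_sum_filter_lt {s t : Fin N → ℝ} (hs : Antitone s) (hs0 : ∀ i, 0 ≤ s i)
    (ht0 : ∀ j, 0 ≤ t j) (ht1 : ∀ j, t j ≤ 1) {k : ℕ}
    (htk : ∑ j, t j ≤ #{j : Fin N | j.val < k}) :
    ∑ j, s j * t j ≤ ∑ j : Fin N with j.val < k, s j := by
  set b : Fin N → ℝ := fun j => if (j : ℕ) < k then 1 else 0
  have hb : ∑ j : Fin N with j.val < k, s j = ∑ j, s j * b j := by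
    simp [b, Finset.sum_filter]
  rw [hb]
  refine hs.sum_mul_le_sum_mul_of_partialSums_le hs0 fun l => ?_
  rcases le_or_gt l k with hlk | hkl
  · exact Finset.sum_le_sum fun j hj => by
      simpa [b, lt_of_lt_of_le (Finset.mem_filter.1 hj).2 hlk] using ht1 j
  · calc ∑ j : Fin N with j.val < l, t j ≤ ∑ j, t j :=
          Finset.sum_le_sum_of_subset_of_nonneg (Finset.subset_univ _) fun j _ _ => ht0 j
      _ ≤ #{j : Fin N | j.val < k} := htk
      _ = ∑ j : Fin N with j.val < l, b j := by
        rw [Finset.sum_filter, Finset.card_filter]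
        push_cast
        exact Finset.sum_congr rfl fun j _ => by
          by_cases h : (j : ℕ) < k
          · simp [b, h, h.trans hkl]
          · simp [b, h]

theorem Fin.eq_of_forall_sum_filter_lt_eq {f g : Fin N → ℝ}
    (h : ∀ k : ℕ, ∑ i : Fin N with i.val < k, f i = ∑ i : Fin N with i.val < k, g i) : f = g := by
  funext j
  have hsplit (φ : Fin N → ℝ) :
      ∑ i : Fin N with i.val < j.val + 1, φ i = ∑ i : Fin N with i.val < j.val, φ i + φ j := by
    rw [show univ.filter (fun i : Fin N => i.val < j.val + 1)
        = insert j (univ.filter fun i : Fin N => i.val < j.val) by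
      ext i
      simp only [Finset.mem_filter, Finset.mem_univ, true_and, Finset.mem_insert, Fin.ext_iff]
      omega,
      Finset.sum_insert (by simp), add_comm]
  have := h (j.val + 1)
  rw [hsplit, hsplit, h j] at this
  linarith

end PartialSums

section Bessel

variable {ι κ α : Type*} [Fintype α] [DecidableEq κ]

theorem dotProduct_mulVec_self_le [Fintype κ] {p : Matrix κ α ℝ} (hp : p * pᵀ = 1) (x : α → ℝ) :
    (p *ᵥ x) ⬝ᵥ (p *ᵥ x) ≤ x ⬝ᵥ x := by
  set y := p *ᵥ x
  have hxy : x ⬝ᵥ (pᵀ *ᵥ y) = y ⬝ᵥ y := by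
    rw [dotProduct_mulVec, vecMul_transpose]
  have hyy : (pᵀ *ᵥ y) ⬝ᵥ (pᵀ *ᵥ y) = y ⬝ᵥ y := by
    rw [dotProduct_mulVec, vecMul_transpose, mulVec_mulVec, hp, one_mulVec]
  have hres : (x - pᵀ *ᵥ y) ⬝ᵥ (x - pᵀ *ᵥ y) = x ⬝ᵥ x - y ⬝ᵥ y := by
    simp only [sub_dotProduct, dotProduct_sub, hxy, hyy, dotProduct_comm (pᵀ *ᵥ y) x]
    ring
  have := dotProduct_self_star_nonneg (x - pᵀ *ᵥ y)
  rw [star_trivial, hres] at this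
  linarith

theorem sum_sq_mul_transpose_row_le_one [Fintype κ] [DecidableEq ι] {u : Matrix ι α ℝ}
    {p : Matrix κ α ℝ} (hu : u * uᵀ = 1) (hp : p * pᵀ = 1) (i : ι) :
    ∑ j, (u * pᵀ) i j ^ 2 ≤ 1 := by
  have hui : u i ⬝ᵥ u i = 1 := by simpa [mul_apply, dotProduct] using congr_fun₂ hu i i
  calc ∑ j, (u * pᵀ) i j ^ 2 = (p *ᵥ u i) ⬝ᵥ (p *ᵥ u i) := by
        simp [dotProduct, mul_apply, mulVec, sq, mul_comm]
    _ ≤ 1 := hui ▸ dotProduct_mulVec_self_le hp (u i)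

theorem sum_sq_mul_transpose_col_le_one [Fintype ι] [DecidableEq ι] {u : Matrix ι α ℝ}
    {p : Matrix κ α ℝ} (hu : u * uᵀ = 1) (hp : p * pᵀ = 1) (j : κ) :
    ∑ i, (u * pᵀ) i j ^ 2 ≤ 1 := by
  have h := sum_sq_mul_transpose_row_le_one hp hu j
  rw [← transpose_transpose p, ← transpose_mul] at h
  simpa only [transpose_apply] using h

end Bessel

theorem Antitone.sum_filter_lt_sum_mul_mul_le {N : ℕ} {s : Fin N → ℝ} (hs : Antitone s)
    (hs0 : ∀ j, 0 ≤ s j) {M L : Matrix (Fin N) (Fin N) ℝ} (hrowM : ∀ i, ∑ j, M i j ^ 2 ≤ 1)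
    (hrowL : ∀ i, ∑ j, L i j ^ 2 ≤ 1) (hcolM : ∀ j, ∑ i, M i j ^ 2 ≤ 1)
    (hcolL : ∀ j, ∑ i, L i j ^ 2 ≤ 1) (k : ℕ) :
    ∑ i : Fin N with i.val < k, ∑ j, s j * (M i j * L i j) ≤ ∑ j : Fin N with j.val < k, s j := by
  -- By AM-GM the weights `tⱼ = Σ_{i<k} (Mᵢⱼ² + Lᵢⱼ²) / 2` dominate `Σ_{i<k} Mᵢⱼ Lᵢⱼ`;
  -- they lie in `[0, 1]` and sum to at most `k`.
  have ht1 (j : Fin N) : ∑ i : Fin N with i.val < k, (M i j ^ 2 + L i j ^ 2) / 2 ≤ 1 :=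
    calc _ ≤ ∑ i, (M i j ^ 2 + L i j ^ 2) / 2 :=
          Finset.sum_le_sum_of_subset_of_nonneg (Finset.subset_univ _) fun i _ _ => by positivity
      _ ≤ 1 := by
          rw [← Finset.sum_div, Finset.sum_add_distrib]
          linarith [hcolM j, hcolL j]
  have htk : ∑ j, ∑ i : Fin N with i.val < k, (M i j ^ 2 + L i j ^ 2) / 2
      ≤ (#{j : Fin N | j.val < k} : ℝ) :=
    calc _ = ∑ i : Fin N with i.val < k, (∑ j, M i j ^ 2 + ∑ j, L i j ^ 2) / 2 := by
          rw [Finset.sum_comm]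
          exact Finset.sum_congr rfl fun i _ => by rw [← Finset.sum_div, Finset.sum_add_distrib]
      _ ≤ ∑ i : Fin N with i.val < k, 1 :=
          Finset.sum_le_sum fun i _ => by linarith [hrowM i, hrowL i]
      _ = #{j : Fin N | j.val < k} := by simp
  calc _ ≤ ∑ i : Fin N with i.val < k, ∑ j, s j * ((M i j ^ 2 + L i j ^ 2) / 2) :=
        Finset.sum_le_sum fun i _ => Finset.sum_le_sum fun j _ => mul_le_mul_of_nonneg_left
          (by nlinarith [sq_nonneg (M i j - L i j)]) (hs0 j)
    _ = ∑ j, s j * ∑ i : Fin N with i.val < k, (M i j ^ 2 + L i j ^ 2) / 2 := by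
        rw [Finset.sum_comm]
        simp only [Finset.mul_sum]
    _ ≤ _ := hs.sum_mul_le_sum_filter_lt hs0 (fun j => Finset.sum_nonneg fun i _ => by positivity)
        ht1 htk

theorem ky_fan_inequality {N : ℕ} {α β : Type*} [Fintype α] [Fintype β] {s : Fin N → ℝ}
    (hs : Antitone s) (hs0 : ∀ j, 0 ≤ s j) {p u : Matrix (Fin N) α ℝ} {q v : Matrix (Fin N) β ℝ}
    (hp : p * pᵀ = 1) (hq : q * qᵀ = 1) (hu : u * uᵀ = 1) (hv : v * vᵀ = 1) (k : ℕ) :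
    ∑ i : Fin N with i.val < k, (u * (pᵀ * diagonal s * q) * vᵀ) i i
      ≤ ∑ j : Fin N with j.val < k, s j := by
  have hdiag (i : Fin N) : (u * (pᵀ * diagonal s * q) * vᵀ) i i
      = ∑ j, s j * ((u * pᵀ) i j * (v * qᵀ) i j) := by
    rw [show u * (pᵀ * diagonal s * q) * vᵀ = u * pᵀ * diagonal s * (v * qᵀ)ᵀ by
      simp only [transpose_mul, transpose_transpose, Matrix.mul_assoc], mul_apply]
    simp only [mul_diagonal, transpose_apply]
    exact Finset.sum_congr rfl fun j _ => by ring
  rw [Finset.sum_congr rfl fun i _ => hdiag i]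
  exact hs.sum_filter_lt_sum_mul_mul_le hs0 (sum_sq_mul_transpose_row_le_one hu hp)
    (sum_sq_mul_transpose_row_le_one hv hq) (sum_sq_mul_transpose_col_le_one hu hp)
    (sum_sq_mul_transpose_col_le_one hv hq) k

theorem exists_orthonormalBasis_eq_norm_smul {ι E : Type*} [Fintype ι] [NormedAddCommGroup E]
    [InnerProductSpace ℝ E] [FiniteDimensional ℝ E] (hcard : Module.finrank ℝ E = Fintype.card ι)
    {c : ι → E} (hc : Pairwise fun i j => ⟪c i, c j⟫ = 0) :
    ∃ b : OrthonormalBasis ι ℝ E, ∀ i, c i = ‖c i‖ • b i := by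
  classical
  have hon : Orthonormal ℝ ({i | c i ≠ 0}.domRestrict fun i => ‖c i‖⁻¹ • c i) := by
    rw [orthonormal_iff_ite]
    rintro ⟨i, hi⟩ ⟨j, hj⟩
    change ⟪‖c i‖⁻¹ • c i, ‖c j‖⁻¹ • c j⟫ = _
    rw [real_inner_smul_left, real_inner_smul_right]
    by_cases hij : i = j
    · subst hij
      have : ‖c i‖ ≠ 0 := norm_ne_zero_iff.2 hi
      rw [if_pos rfl, real_inner_self_eq_norm_sq]
      field_simp
    · rw [hc hij, if_neg fun h => hij (congr_arg Subtype.val h), mul_zero, mul_zero]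
  obtain ⟨b, hb⟩ := hon.exists_orthonormalBasis_extension_of_card_eq hcard
  refine ⟨b, fun i => ?_⟩
  by_cases hi : c i = 0
  · simp [hi]
  · rw [hb i hi, smul_smul, mul_inv_cancel₀ (norm_ne_zero_iff.2 hi), one_smul]

theorem exists_mul_transpose_eq_one_of_transpose_mul_self_eq_diagonal {κ ι : Type*}
    [Fintype κ] [Fintype ι] [DecidableEq ι] (hcard : Fintype.card κ = Fintype.card ι)
    {C : Matrix κ ι ℝ} {d : ι → ℝ} (hC : Cᵀ * C = diagonal d) :
    ∃ P : Matrix ι κ ℝ, P * Pᵀ = 1 ∧ C = Pᵀ * diagonal fun i => √(d i) := by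
  set c : ι → EuclideanSpace ℝ κ := fun i => WithLp.toLp 2 (Cᵀ i)
  have hinner (i j : ι) : ⟪c i, c j⟫ = diagonal d i j := by
    rw [← hC, EuclideanSpace.inner_eq_star_dotProduct]
    simp [c, mul_apply, dotProduct, mul_comm]
  obtain ⟨b, hb⟩ := exists_orthonormalBasis_eq_norm_smul (by simpa using hcard)
    (c := c) fun i j hij => by simp [hinner, hij]
  refine ⟨Matrix.of fun i a => b i a, ?_, ?_⟩
  · ext i j
    have := orthonormal_iff_ite.1 b.orthonormal i j
    rw [EuclideanSpace.inner_eq_star_dotProduct] at this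
    simpa [mul_apply, dotProduct, mul_comm, one_apply] using this
  · ext a i
    have hnorm : ‖c i‖ = √(d i) := by
      rw [norm_eq_sqrt_real_inner, hinner, diagonal_apply_eq]
    have := congr_arg (fun x : EuclideanSpace ℝ κ => x a) (hb i)
    simp only [transpose_apply, hnorm, PiLp.smul_apply, smul_eq_mul, c] at this
    simp [this, mul_comm]

theorem Monotone.eq_zero_of_card_ne_zero_le {n m : ℕ} {f : Fin n → ℝ} (hf : Monotone f)
    (hf0 : ∀ l, 0 ≤ f l) (hcard : Fintype.card {l // f l ≠ 0} ≤ m) {l : Fin n}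
    (hl : (l : ℕ) + m < n) : f l = 0 := by
  by_contra hne
  have hsub : Finset.Ici l ⊆ ({l' | f l' ≠ 0} : Finset (Fin n)) := fun l' hl' => by
    rw [Finset.mem_Ici] at hl'
    rw [Finset.mem_filter]
    exact ⟨Finset.mem_univ _, ((lt_of_le_of_ne (hf0 l) (Ne.symm hne)).trans_le (hf hl')).ne'⟩
  have := (Finset.card_le_card hsub).trans ((Fintype.card_subtype _).symm.trans_le hcard)
  rw [Fin.card_Ici] at this
  omega

section Eigenvectors

variable {κ ι : Type*} [Fintype ι] [DecidableEq ι]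

theorem eigenvectorUnitary_mul_transpose_self {A : Matrix ι ι ℝ} (hA : A.IsHermitian) :
    (hA.eigenvectorUnitary : Matrix ι ι ℝ) * (hA.eigenvectorUnitary : Matrix ι ι ℝ)ᵀ = 1 := by
  simpa [star_eq_conjTranspose] using hA.eigenvectorUnitary.2.2

theorem eigenvectorUnitary_transpose_mul_self {A : Matrix ι ι ℝ} (hA : A.IsHermitian) :
    (hA.eigenvectorUnitary : Matrix ι ι ℝ)ᵀ * (hA.eigenvectorUnitary : Matrix ι ι ℝ) = 1 := by
  simpa [star_eq_conjTranspose] using hA.eigenvectorUnitary.2.1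

theorem transpose_mul_self_mul_eigenvectorUnitary [Fintype κ] (X : Matrix κ ι ℝ) :
    (X * ((isHermitian_conjTranspose_mul_self X).eigenvectorUnitary : Matrix ι ι ℝ))ᵀ
        * (X * ((isHermitian_conjTranspose_mul_self X).eigenvectorUnitary : Matrix ι ι ℝ))
      = diagonal (isHermitian_conjTranspose_mul_self X).eigenvalues := by
  set hH := isHermitian_conjTranspose_mul_self X
  set W : Matrix ι ι ℝ := (hH.eigenvectorUnitary : Matrix ι ι ℝ)
  have hWW : Wᵀ * W = 1 := eigenvectorUnitary_transpose_mul_self hH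
  have h := hH.spectral_theorem
  simp only [Unitary.conjStarAlgAut_apply, RCLike.ofReal_real_eq_id, Function.id_comp,
    conjTranspose_eq_transpose_of_trivial, star_eq_conjTranspose] at h
  change Xᵀ * X = W * diagonal hH.eigenvalues * Wᵀ at h
  rw [transpose_mul, Matrix.mul_assoc, ← Matrix.mul_assoc Xᵀ, h]
  simp only [Matrix.mul_assoc, hWW, Matrix.mul_one]
  rw [← Matrix.mul_assoc, hWW, Matrix.one_mul]

end Eigenvectors

section SingularValues

variable {m n : ℕ} (hmn : m ≤ n)

noncomputable def singularIndex (X : Matrix (Fin m) (Fin n) ℝ) : Fin m → Fin n := fun i =>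
  Tuple.sort (isHermitian_conjTranspose_mul_self X).eigenvalues (Fin.rev (Fin.castLE hmn i))

theorem singularIndex_injective (X : Matrix (Fin m) (Fin n) ℝ) :
    Function.Injective (singularIndex hmn X) := fun _ _ h =>
  Fin.castLE_injective hmn (Fin.rev_injective ((Tuple.sort _).injective h))

theorem eigenvalues_eq_zero_of_notMem_range_singularIndex (X : Matrix (Fin m) (Fin n) ℝ)
    {j : Fin n} (hj : j ∉ Set.range (singularIndex hmn X)) :
    (isHermitian_conjTranspose_mul_self X).eigenvalues j = 0 := by
  -- `rank (XᵀX) ≤ m`, so at most `m` eigenvalues are nonzero, and sorting puts them into the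
  -- top `m` slots, which form the range of `singularIndex`.
  set hH := isHermitian_conjTranspose_mul_self X
  set τ := Tuple.sort hH.eigenvalues
  have hcard : Fintype.card {l // (hH.eigenvalues ∘ τ) l ≠ 0} ≤ m :=
    calc Fintype.card {l // (hH.eigenvalues ∘ τ) l ≠ 0}
        = Fintype.card {j // hH.eigenvalues j ≠ 0} :=
          Fintype.card_congr (τ.subtypeEquiv fun l => Iff.rfl)
      _ = X.rank := by rw [← hH.rank_eq_card_non_zero_eigs, rank_conjTranspose_mul_self]
      _ ≤ m := rank_le_height X
  obtain ⟨l, rfl⟩ := τ.surjective j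
  have hl : (l : ℕ) + m < n := by
    by_contra hle
    refine hj ⟨⟨n - 1 - l, by omega⟩, congr_arg τ (Fin.ext ?_)⟩
    simp only [Fin.castLE_mk, Fin.val_rev]
    omega
  exact (Tuple.monotone_sort hH.eigenvalues).eq_zero_of_card_ne_zero_le
    (fun l => eigenvalues_conjTranspose_mul_self_nonneg X _) hcard hl

theorem singularValues_nonneg (X : Matrix (Fin m) (Fin n) ℝ) (i : Fin m) :
    0 ≤ singularValues hmn X i :=
  Real.sqrt_nonneg _

theorem singularValues_antitone (X : Matrix (Fin m) (Fin n) ℝ) :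
    Antitone (singularValues hmn X) := fun _ _ hij =>
  Real.sqrt_le_sqrt <|
    Tuple.monotone_sort _ (Fin.rev_le_rev.2 ((Fin.castLE_le_castLE_iff hmn).2 hij))

theorem exists_svd (X : Matrix (Fin m) (Fin n) ℝ) :
    ∃ (P : Matrix (Fin m) (Fin m) ℝ) (Q : Matrix (Fin m) (Fin n) ℝ),
      P * Pᵀ = 1 ∧ Q * Qᵀ = 1 ∧ X = Pᵀ * diagonal (singularValues hmn X) * Q := by
  set hH := isHermitian_conjTranspose_mul_self X
  set W : Matrix (Fin n) (Fin n) ℝ := (hH.eigenvectorUnitary : Matrix (Fin n) (Fin n) ℝ)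
  set ρ := singularIndex hmn X
  have hρ : Function.Injective ρ := singularIndex_injective hmn X
  have hgram : (X * W)ᵀ * (X * W) = diagonal hH.eigenvalues :=
    transpose_mul_self_mul_eigenvectorUnitary X
  have hker (j : Fin n) (hj : j ∉ Set.range ρ) (a : Fin m) : (X * W) a j = 0 := by
    have h0 : hH.eigenvalues j = 0 := eigenvalues_eq_zero_of_notMem_range_singularIndex hmn X hj
    have hjj := congr_fun₂ hgram j j
    rw [diagonal_apply_eq, h0, mul_apply] at hjj
    exact congr_fun (dotProduct_self_eq_zero.1 (by simpa [dotProduct] using hjj)) a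
  -- The rows of `Q` are the eigenvectors of the top `m` eigenvalues of `XᵀX`; `X` kills the
  -- others, so `X = X Qᵀ Q`, and `X Qᵀ` has orthogonal columns of norms `σᵢ(X)`.
  set Q : Matrix (Fin m) (Fin n) ℝ := Wᵀ.submatrix ρ id
  have hQt : Qᵀ = W.submatrix id ρ := rfl
  have hQ : Q * Qᵀ = 1 := by
    rw [hQt, ← submatrix_mul _ _ _ _ _ Function.bijective_id,
      eigenvectorUnitary_transpose_mul_self hH, submatrix_one _ hρ]
  have hXQ : X * Qᵀ = (X * W).submatrix id ρ := by
    rw [hQt, ← submatrix_id_id X, ← submatrix_mul _ _ _ _ _ Function.bijective_id,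
      submatrix_id_id]
  have hX : X = X * Qᵀ * Q := by
    ext a k
    have hXW := congr_fun₂ (show X * W * Wᵀ = X by
      rw [Matrix.mul_assoc, eigenvectorUnitary_mul_transpose_self hH, Matrix.mul_one]) a k
    rw [mul_apply] at hXW
    rw [← hXW, hXQ, mul_apply]
    exact (Fintype.sum_of_injective ρ hρ _ _ (fun j hj => by rw [hker j hj a, zero_mul])
      fun i => rfl).symm
  obtain ⟨P, hP, hC⟩ := exists_mul_transpose_eq_one_of_transpose_mul_self_eq_diagonal
    (by simp) (C := X * Qᵀ) (d := hH.eigenvalues ∘ ρ) (by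
      rw [hXQ, transpose_submatrix, ← submatrix_mul _ _ _ _ _ Function.bijective_id, hgram,
        submatrix_diagonal _ _ hρ])
  exact ⟨P, Q, hP, hQ, hX.trans (by rw [hC]; rfl)⟩

end SingularValues

section Decomposition

variable {m n : ℕ}

theorem mul_transpose_eq_one_of_orthonormal {ι κ : Type*} [Fintype κ] [DecidableEq ι]
    {u : Matrix ι κ ℝ} (hu : ∀ i j, ∑ k, u i k * u j k = if i = j then (1 : ℝ) else 0) :
    u * uᵀ = 1 :=
  Matrix.ext fun i j => by simpa [mul_apply, one_apply] using hu i j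

theorem of_sum_mul_eq_transpose_mul_diagonal_mul {ι α β : Type*} [Fintype ι] [DecidableEq ι]
    (s : ι → ℝ) (p : Matrix ι α ℝ) (q : Matrix ι β ℝ) :
    Matrix.of (fun j k => ∑ i, s i * (p i j * q i k)) = pᵀ * diagonal s * q := by
  ext j k
  rw [of_apply, mul_apply]
  simp only [mul_diagonal, transpose_apply]
  exact Finset.sum_congr rfl fun i _ => by ring

theorem frobSq_eq_trace (A : Matrix (Fin m) (Fin n) ℝ) : frobSq A = trace (A * Aᵀ) := by
  simp [frobSq, trace, mul_apply, sq]

theorem frobSq_transpose_mul_diagonal_mul {P : Matrix (Fin m) (Fin m) ℝ}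
    {Q : Matrix (Fin m) (Fin n) ℝ} (hP : P * Pᵀ = 1) (hQ : Q * Qᵀ = 1) (s : Fin m → ℝ) :
    frobSq (Pᵀ * diagonal s * Q) = ∑ i, s i ^ 2 := by
  rw [frobSq_eq_trace, transpose_mul, transpose_mul, transpose_transpose, diagonal_transpose,
    show Pᵀ * diagonal s * Q * (Qᵀ * (diagonal s * P)) = Pᵀ * (diagonal s * diagonal s * P) by
      simp only [Matrix.mul_assoc, ← Matrix.mul_assoc Q, hQ, Matrix.one_mul],
    trace_mul_comm, Matrix.mul_assoc, hP, Matrix.mul_one, diagonal_mul_diagonal, trace_diagonal]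
  simp [sq]

theorem trace_transpose_mul_diagonal_mul_mul_transpose (P : Matrix (Fin m) (Fin m) ℝ)
    (Q : Matrix (Fin m) (Fin n) ℝ) (s : Fin m → ℝ) (X : Matrix (Fin m) (Fin n) ℝ) :
    trace (Pᵀ * diagonal s * Q * Xᵀ) = ∑ i, s i * (P * X * Qᵀ) i i := by
  rw [Matrix.mul_assoc, Matrix.mul_assoc, trace_mul_comm, Matrix.mul_assoc, trace_mul_comm,
    ← trace_transpose]
  simp [trace, diagonal_mul, Matrix.mul_assoc, transpose_mul]

theorem mul_transpose_mul_diagonal_mul_mul_transpose {P : Matrix (Fin m) (Fin m) ℝ}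
    {Q : Matrix (Fin m) (Fin n) ℝ} (hP : P * Pᵀ = 1) (hQ : Q * Qᵀ = 1) (s : Fin m → ℝ) :
    P * (Pᵀ * diagonal s * Q) * Qᵀ = diagonal s := by
  simp only [← Matrix.mul_assoc, hP, Matrix.one_mul]
  rw [Matrix.mul_assoc, hQ, Matrix.mul_one]

end Decomposition

section SingularValueInequalities

variable {m n : ℕ} (hmn : m ≤ n)

theorem singularValues_transpose_mul_diagonal_mul {s : Fin m → ℝ} (hs : Antitone s)
    (hs0 : ∀ i, 0 ≤ s i) {P : Matrix (Fin m) (Fin m) ℝ} {Q : Matrix (Fin m) (Fin n) ℝ}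
    (hP : P * Pᵀ = 1) (hQ : Q * Qᵀ = 1) :
    singularValues hmn (Pᵀ * diagonal s * Q) = s := by
  set A := Pᵀ * diagonal s * Q with hA_def
  obtain ⟨P', Q', hP', hQ', hA⟩ := exists_svd hmn A
  -- Ky Fan's inequality in both directions: `s` and `σ(A)` have the same partial sums.
  refine Fin.eq_of_forall_sum_filter_lt_eq fun k => le_antisymm ?_ ?_
  · have h := ky_fan_inequality hs hs0 hP hQ hP' hQ' k
    rw [← hA_def, hA, mul_transpose_mul_diagonal_mul_mul_transpose hP' hQ'] at h
    simpa only [diagonal_apply_eq] using h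
  · have h := ky_fan_inequality (singularValues_antitone hmn A) (singularValues_nonneg hmn A)
      hP' hQ' hP hQ k
    rw [← hA, hA_def, mul_transpose_mul_diagonal_mul_mul_transpose hP hQ] at h
    simpa only [diagonal_apply_eq] using h

theorem frobSq_eq_sum_sq_singularValues (X : Matrix (Fin m) (Fin n) ℝ) :
    frobSq X = ∑ i, singularValues hmn X i ^ 2 := by
  obtain ⟨P, Q, hP, hQ, hX⟩ := exists_svd hmn X
  conv_lhs => rw [hX]
  exact frobSq_transpose_mul_diagonal_mul hP hQ _

theorem trace_mul_transpose_le_sum_singularValues_mul (Y X : Matrix (Fin m) (Fin n) ℝ) :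
    trace (Y * Xᵀ) ≤ ∑ i, singularValues hmn Y i * singularValues hmn X i := by
  obtain ⟨P, Q, hP, hQ, hY⟩ := exists_svd hmn Y
  obtain ⟨P', Q', hP', hQ', hX⟩ := exists_svd hmn X
  have htrace := trace_transpose_mul_diagonal_mul_mul_transpose P Q (singularValues hmn Y) X
  rw [← hY] at htrace
  rw [htrace]
  refine (singularValues_antitone hmn Y).sum_mul_le_sum_mul_of_partialSums_le
    (singularValues_nonneg hmn Y) fun k => ?_
  have h := ky_fan_inequality (singularValues_antitone hmn X) (singularValues_nonneg hmn X)
    hP' hQ' hP hQ k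
  rwa [← hX] at h

theorem sum_sq_sub_singularValues_le_frobSq_sub (Y X : Matrix (Fin m) (Fin n) ℝ) :
    ∑ i, (singularValues hmn Y i - singularValues hmn X i) ^ 2 ≤ frobSq (Y - X) := by
  have hsub : frobSq (Y - X) = frobSq Y - 2 * trace (Y * Xᵀ) + frobSq X := by
    have hcomm : trace (X * Yᵀ) = trace (Y * Xᵀ) := by
      rw [← trace_transpose, transpose_mul, transpose_transpose]
    simp only [frobSq_eq_trace, transpose_sub, Matrix.sub_mul, Matrix.mul_sub, trace_sub, hcomm]
    ring
  rw [hsub, frobSq_eq_sum_sq_singularValues hmn Y, frobSq_eq_sum_sq_singularValues hmn X]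
  have hvN := trace_mul_transpose_le_sum_singularValues_mul hmn Y X
  calc ∑ i, (singularValues hmn Y i - singularValues hmn X i) ^ 2
      = ∑ i, singularValues hmn Y i ^ 2
        - 2 * ∑ i, singularValues hmn Y i * singularValues hmn X i
        + ∑ i, singularValues hmn X i ^ 2 := by
        simp only [sub_sq, Finset.sum_add_distrib, Finset.sum_sub_distrib, Finset.mul_sum,
          mul_assoc]
    _ ≤ _ := by linarith

end SingularValueInequalities

theorem partial_threshold_nonneg {m : ℕ} {s : Fin m → ℝ} (hs0 : ∀ i, 0 ≤ s i) (lam : ℝ) (r : ℕ)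
    (i : Fin m) : 0 ≤ if (i : ℕ) < r then s i else max (s i - lam) 0 := by
  split_ifs
  exacts [hs0 i, le_max_right _ _]

theorem antitone_partial_threshold {m : ℕ} {s : Fin m → ℝ} (hs : Antitone s)
    (hs0 : ∀ i, 0 ≤ s i) {lam : ℝ} (hlam : 0 ≤ lam) (r : ℕ) :
    Antitone fun i : Fin m => if (i : ℕ) < r then s i else max (s i - lam) 0 := fun i j hij => by
  have hij' : (i : ℕ) ≤ j := hij
  dsimp only
  split_ifs with hj hi hi
  · exact hs hij
  · omega
  · exact max_le ((sub_le_self _ hlam).trans (hs hij)) (hs0 i)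
  · exact max_le_max (sub_le_sub_right (hs hij) _) le_rfl

theorem soft_threshold_le {lam : ℝ} (hlam : 0 < lam) (s : ℝ) {x : ℝ} (hx : 0 ≤ x) :
    max (s - lam) 0 + 1 / (2 * lam) * (s - max (s - lam) 0) ^ 2
      ≤ x + 1 / (2 * lam) * (s - x) ^ 2 := by
  rcases le_total lam s with h | h
  · rw [max_eq_left (by linarith)]
    have hgap : x + 1 / (2 * lam) * (s - x) ^ 2 - (s - lam + 1 / (2 * lam) * (s - (s - lam)) ^ 2)
        = 1 / (2 * lam) * (s - x - lam) ^ 2 := by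
      field_simp
      ring
    have : 0 ≤ 1 / (2 * lam) * (s - x - lam) ^ 2 := by positivity
    linarith
  · rw [max_eq_right (by linarith)]
    have hgap : x + 1 / (2 * lam) * (s - x) ^ 2 - (0 + 1 / (2 * lam) * (s - 0) ^ 2)
        = x * (lam - s) / lam + 1 / (2 * lam) * x ^ 2 := by
      field_simp
      ring
    have : 0 ≤ x * (lam - s) / lam + 1 / (2 * lam) * x ^ 2 := by
      have : 0 ≤ lam - s := by linarith
      positivity
    linarith

theorem partial_soft_threshold_le {lam : ℝ} (hlam : 0 < lam) (r i : ℕ) (s : ℝ) {x : ℝ}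
    (hx : 0 ≤ x) :
    (if r ≤ i then (if i < r then s else max (s - lam) 0) else 0)
        + 1 / (2 * lam) * (s - if i < r then s else max (s - lam) 0) ^ 2
      ≤ (if r ≤ i then x else 0) + 1 / (2 * lam) * (s - x) ^ 2 := by
  by_cases hi : r ≤ i
  · simp only [if_pos hi, if_neg (not_lt.2 hi)]
    exact soft_threshold_le hlam s hx
  · rw [if_neg hi, if_neg hi, if_pos (not_le.1 hi), sub_self]
    simpa using (by positivity : 0 ≤ 1 / (2 * lam) * (s - x) ^ 2)

theorem sum_partial_soft_threshold_le {m : ℕ} {lam : ℝ} (hlam : 0 < lam) (r : ℕ)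
    (s x : Fin m → ℝ) (hx : ∀ i, 0 ≤ x i) :
    (∑ i : Fin m, if r ≤ (i : ℕ) then (if (i : ℕ) < r then s i else max (s i - lam) 0) else 0)
        + 1 / (2 * lam) * ∑ i, (s i - if (i : ℕ) < r then s i else max (s i - lam) 0) ^ 2
      ≤ (∑ i : Fin m, if r ≤ (i : ℕ) then x i else 0) + 1 / (2 * lam) * ∑ i, (s i - x i) ^ 2 := by
  rw [Finset.mul_sum, Finset.mul_sum, ← Finset.sum_add_distrib, ← Finset.sum_add_distrib]
  exact Finset.sum_le_sum fun i _ => partial_soft_threshold_le hlam r i (s i) (hx i)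

theorem psvt_minimizes_truncated_nuclear_norm_problem_general {m n : ℕ} (hmn : m ≤ n)
    (u : Fin m → Fin m → ℝ) (v : Fin m → Fin n → ℝ)
    (hu : ∀ i j, ∑ k, u i k * u j k = if i = j then (1 : ℝ) else 0)
    (hv : ∀ i j, ∑ k, v i k * v j k = if i = j then (1 : ℝ) else 0)
    (σY : Fin m → ℝ) (hord : Antitone σY) (hnn : ∀ i, 0 ≤ σY i)
    (Y : Matrix (Fin m) (Fin n) ℝ)
    (hY : Y = Matrix.of fun j k => ∑ i, σY i * (u i j * v i k))
    (lam : ℝ) (hlam : 0 < lam) (r : ℕ)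
    (Xhat : Matrix (Fin m) (Fin n) ℝ)
    (hXhat : Xhat = Matrix.of fun j k =>
      ∑ i : Fin m, (if (i : ℕ) < r then σY i else max (σY i - lam) 0) * (u i j * v i k)) :
    ∀ X : Matrix (Fin m) (Fin n) ℝ,
      (∑ i : Fin m, if r ≤ (i : ℕ) then singularValues hmn Xhat i else 0)
          + (1 / (2 * lam)) * frobSq (Y - Xhat)
        ≤ (∑ i : Fin m, if r ≤ (i : ℕ) then singularValues hmn X i else 0)
          + (1 / (2 * lam)) * frobSq (Y - X) := by
  intro X
  set c : Fin m → ℝ := fun i => if (i : ℕ) < r then σY i else max (σY i - lam) 0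
  set U : Matrix (Fin m) (Fin m) ℝ := u
  set V : Matrix (Fin m) (Fin n) ℝ := v
  have hU := mul_transpose_eq_one_of_orthonormal hu
  have hV := mul_transpose_eq_one_of_orthonormal hv
  replace hY : Y = Uᵀ * diagonal σY * V :=
    hY.trans (of_sum_mul_eq_transpose_mul_diagonal_mul σY U V)
  replace hXhat : Xhat = Uᵀ * diagonal c * V :=
    hXhat.trans (of_sum_mul_eq_transpose_mul_diagonal_mul c U V)
  have hσY : singularValues hmn Y = σY :=
    hY ▸ singularValues_transpose_mul_diagonal_mul hmn hord hnn hU hV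
  have hσXhat : singularValues hmn Xhat = c :=
    hXhat ▸ singularValues_transpose_mul_diagonal_mul hmn
      (antitone_partial_threshold hord hnn hlam.le r) (partial_threshold_nonneg hnn lam r) hU hV
  have hresidual : frobSq (Y - Xhat) = ∑ i, (σY i - c i) ^ 2 := by
    rw [hY, hXhat, ← Matrix.sub_mul, ← Matrix.mul_sub, diagonal_sub,
      frobSq_transpose_mul_diagonal_mul hU hV]
  have hmirsky := sum_sq_sub_singularValues_le_frobSq_sub hmn Y X
  rw [hσY] at hmirsky
  rw [hσXhat, hresidual]
  refine (sum_partial_soft_threshold_le hlam r σY _ (singularValues_nonneg hmn X)).trans ?_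
  gcongr

/-- If `Y = Σᵢ σ_{Y,i} uᵢvᵢᵀ` is an SVD of `Y`, `λ > 0`, and `r < m`, then the partial
singular value thresholding
`PSVT_{r,λ}(Y) = Σ_{i≤r} σ_{Y,i} uᵢvᵢᵀ + Σ_{i>r} max(σ_{Y,i} − λ, 0) uᵢvᵢᵀ`
is a global minimizer of the truncated nuclear norm problem
`min_X ‖X‖_r + (1/(2λ))‖Y − X‖_F²`, where `‖X‖_r = Σ_{i>r} σ_{X,i}`. -/
theorem psvt_minimizes_truncated_nuclear_norm_problem {m n : ℕ} (hmn : m ≤ n)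
    (u : Fin m → Fin m → ℝ) (v : Fin m → Fin n → ℝ)
    (hu : ∀ i j, ∑ k, u i k * u j k = if i = j then (1 : ℝ) else 0)
    (hv : ∀ i j, ∑ k, v i k * v j k = if i = j then (1 : ℝ) else 0)
    (σY : Fin m → ℝ) (hord : Antitone σY) (hnn : ∀ i, 0 ≤ σY i)
    (Y : Matrix (Fin m) (Fin n) ℝ)
    (hY : Y = Matrix.of fun j k => ∑ i, σY i * (u i j * v i k))
    (lam : ℝ) (hlam : 0 < lam) (r : ℕ) (hr : r < m)
    (Xhat : Matrix (Fin m) (Fin n) ℝ)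
    (hXhat : Xhat = Matrix.of fun j k =>
      ∑ i : Fin m, (if (i : ℕ) < r then σY i else max (σY i - lam) 0) * (u i j * v i k)) :
    ∀ X : Matrix (Fin m) (Fin n) ℝ,
      (∑ i : Fin m, if r ≤ (i : ℕ) then singularValues hmn Xhat i else 0)
          + (1 / (2 * lam)) * frobSq (Y - Xhat)
        ≤ (∑ i : Fin m, if r ≤ (i : ℕ) then singularValues hmn X i else 0)
          + (1 / (2 * lam)) * frobSq (Y - X) :=
  psvt_minimizes_truncated_nuclear_norm_problem_general hmn u v hu hv σY hord hnn Y hY lam hlam r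
    Xhat hXhat
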